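/- arXiv:math/0006211 — 4 statements merged into one kernel-verified Lean document; each statement's English description precedes it below -/
import Mathlib

section
/- Let 𝒳 be a finite-dimensional subspace of ker ε in a unital algebra A° with character ε, and X̄ = 𝒳 ⊕ ℂ·1. Then dim{T ∈ X̄⊗X̄ | m(T)=0} = dim{T ∈ 𝒳⊗𝒳 | m(T) ∈ 𝒳} + dim 𝒳, where m is the multiplication map. -/
open TensorProduct

namespace Stmt2Aux

variable {B : Type*} [Ring B] [Algebra ℂ B] (ε : B →ₐ[ℂ] ℂ)

noncomputable def q : B →ₗ[ℂ] B := (Algebra.linearMap ℂ B).comp ε.toLinearMap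
noncomputable def p : B →ₗ[ℂ] B := LinearMap.id - q ε

lemma q_apply (b : B) : q ε b = ε b • 1 := by
  simp [q, Algebra.algebraMap_eq_smul_one]

lemma p_apply (b : B) : p ε b = b - ε b • 1 := by
  simp [p, q_apply]

lemma q_one : q ε 1 = 1 := by simp [q_apply]
lemma p_one : p ε 1 = 0 := by simp [p_apply]

noncomputable def e : B ⊗[ℂ] B →ₗ[ℂ] B := (LinearMap.mul' ℂ B).comp (TensorProduct.map (p ε) (q ε))
noncomputable def e₂ : B ⊗[ℂ] B →ₗ[ℂ] B := (LinearMap.mul' ℂ B).comp (TensorProduct.map (q ε) (p ε))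

lemma e_tmul (a b : B) : e ε (a ⊗ₜ b) = ε b • p ε a := by
  simp [e, q_apply, mul_smul_comm]

lemma e₂_tmul (a b : B) : e₂ ε (a ⊗ₜ b) = ε a • p ε b := by
  simp [e₂, q_apply, smul_mul_assoc]

lemma decomp :
    (LinearMap.id : B ⊗[ℂ] B →ₗ[ℂ] B ⊗[ℂ] B)
      = TensorProduct.map (p ε) (p ε)
        + ((TensorProduct.mk ℂ B B).flip 1).comp (e ε)
        + (TensorProduct.mk ℂ B B 1).comp (e₂ ε)
        + (TensorProduct.mk ℂ B B 1).comp ((q ε).comp (LinearMap.mul' ℂ B)) := by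
  ext a b
  simp only [TensorProduct.AlgebraTensorModule.curry_apply, TensorProduct.curry_apply,
    LinearMap.restrictScalars_apply, LinearMap.id_coe, id_eq, LinearMap.add_apply, LinearMap.coe_comp, Function.comp_apply, map_tmul, e_tmul,
    e₂_tmul, LinearMap.flip_apply, mk_apply, LinearMap.mul'_apply, q_apply, p_apply, map_mul]
  simp only [sub_tmul, tmul_sub, smul_sub, smul_tmul', tmul_smul, smul_smul]
  module


noncomputable def F : ((B ⊗[ℂ] B) × B) →ₗ[ℂ] B ⊗[ℂ] B :=
  LinearMap.fst ℂ (B ⊗[ℂ] B) B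
    + ((TensorProduct.mk ℂ B B).flip 1).comp (LinearMap.snd ℂ (B ⊗[ℂ] B) B)
    - (TensorProduct.mk ℂ B B 1).comp
        (LinearMap.snd ℂ (B ⊗[ℂ] B) B + (LinearMap.mul' ℂ B).comp (LinearMap.fst ℂ (B ⊗[ℂ] B) B))

lemma F_apply (T : B ⊗[ℂ] B) (x : B) :
    F (T, x) = T + x ⊗ₜ 1 - 1 ⊗ₜ (x + LinearMap.mul' ℂ B T) := by
  simp [F]

lemma mul_F (T : B ⊗[ℂ] B) (x : B) : LinearMap.mul' ℂ B (F (T, x)) = 0 := by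
  simp [F_apply]
  abel


lemma mapPP_F (T : B ⊗[ℂ] B) (x : B) :
    TensorProduct.map (p ε) (p ε) (F (T, x)) = TensorProduct.map (p ε) (p ε) T := by
  simp [F_apply, tmul_add, p_one]

lemma e_F (T : B ⊗[ℂ] B) (x : B) : e ε (F (T, x)) = e ε T + p ε x := by
  simp [F_apply, e_tmul, tmul_add, p_one]


variable (𝒳 : Submodule ℂ B)

lemma p_eq_self (h𝒳 : ∀ x ∈ 𝒳, ε x = 0) {x : B} (hx : x ∈ 𝒳) : p ε x = x := by
  simp [p_apply, h𝒳 x hx]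

lemma p_mem (h𝒳 : ∀ x ∈ 𝒳, ε x = 0) {a : B}
    (ha : a ∈ 𝒳 ⊔ Submodule.span ℂ {(1 : B)}) : p ε a ∈ 𝒳 := by
  obtain ⟨y, hy, z, hz, rfl⟩ := Submodule.mem_sup.mp ha
  obtain ⟨c, rfl⟩ := Submodule.mem_span_singleton.mp hz
  rw [map_add, p_eq_self ε 𝒳 h𝒳 hy, map_smul, p_one, smul_zero, add_zero]
  exact hy

lemma mapPP_mem (h𝒳 : ∀ x ∈ 𝒳, ε x = 0) {S : B ⊗[ℂ] B}
    (hS : S ∈ Submodule.map₂ (TensorProduct.mk ℂ B B)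
      (𝒳 ⊔ Submodule.span ℂ {(1 : B)}) (𝒳 ⊔ Submodule.span ℂ {(1 : B)})) :
    TensorProduct.map (p ε) (p ε) S ∈ Submodule.map₂ (TensorProduct.mk ℂ B B) 𝒳 𝒳 := by
  have h : Submodule.map₂ (TensorProduct.mk ℂ B B)
      (𝒳 ⊔ Submodule.span ℂ {(1 : B)}) (𝒳 ⊔ Submodule.span ℂ {(1 : B)}) ≤
      (Submodule.map₂ (TensorProduct.mk ℂ B B) 𝒳 𝒳).comap (TensorProduct.map (p ε) (p ε)) := by
    refine Submodule.map₂_le.mpr fun a ha b hb => ?_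
    simp only [Submodule.mem_comap, mk_apply, map_tmul]
    exact Submodule.apply_mem_map₂ _ (p_mem ε 𝒳 h𝒳 ha) (p_mem ε 𝒳 h𝒳 hb)
  exact h hS

lemma e_mem (h𝒳 : ∀ x ∈ 𝒳, ε x = 0) {S : B ⊗[ℂ] B}
    (hS : S ∈ Submodule.map₂ (TensorProduct.mk ℂ B B)
      (𝒳 ⊔ Submodule.span ℂ {(1 : B)}) (𝒳 ⊔ Submodule.span ℂ {(1 : B)})) :
    e ε S ∈ 𝒳 := by
  have h : Submodule.map₂ (TensorProduct.mk ℂ B B)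
      (𝒳 ⊔ Submodule.span ℂ {(1 : B)}) (𝒳 ⊔ Submodule.span ℂ {(1 : B)}) ≤
      𝒳.comap (e ε) := by
    refine Submodule.map₂_le.mpr fun a ha b hb => ?_
    simp only [Submodule.mem_comap, mk_apply, e_tmul]
    exact 𝒳.smul_mem _ (p_mem ε 𝒳 h𝒳 ha)
  exact h hS

lemma e₂_mem (h𝒳 : ∀ x ∈ 𝒳, ε x = 0) {S : B ⊗[ℂ] B}
    (hS : S ∈ Submodule.map₂ (TensorProduct.mk ℂ B B)
      (𝒳 ⊔ Submodule.span ℂ {(1 : B)}) (𝒳 ⊔ Submodule.span ℂ {(1 : B)})) :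
    e₂ ε S ∈ 𝒳 := by
  have h : Submodule.map₂ (TensorProduct.mk ℂ B B)
      (𝒳 ⊔ Submodule.span ℂ {(1 : B)}) (𝒳 ⊔ Submodule.span ℂ {(1 : B)}) ≤
      𝒳.comap (e₂ ε) := by
    refine Submodule.map₂_le.mpr fun a ha b hb => ?_
    simp only [Submodule.mem_comap, mk_apply, e₂_tmul]
    exact 𝒳.smul_mem _ (p_mem ε 𝒳 h𝒳 hb)
  exact h hS

lemma mapPP_fix (h𝒳 : ∀ x ∈ 𝒳, ε x = 0) {T : B ⊗[ℂ] B}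
    (hT : T ∈ Submodule.map₂ (TensorProduct.mk ℂ B B) 𝒳 𝒳) :
    TensorProduct.map (p ε) (p ε) T = T := by
  rw [Submodule.map₂_eq_span_image2] at hT
  induction hT using Submodule.span_induction with
  | mem u hu =>
    obtain ⟨a, ha, b, hb, rfl⟩ := hu
    simp only [mk_apply, map_tmul, p_eq_self ε 𝒳 h𝒳 ha, p_eq_self ε 𝒳 h𝒳 hb]
  | zero => simp
  | add u v _ _ hu hv => rw [map_add, hu, hv]
  | smul c u _ hu => rw [map_smul, hu]

lemma e_fix (h𝒳 : ∀ x ∈ 𝒳, ε x = 0) {T : B ⊗[ℂ] B}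
    (hT : T ∈ Submodule.map₂ (TensorProduct.mk ℂ B B) 𝒳 𝒳) :
    e ε T = 0 := by
  rw [Submodule.map₂_eq_span_image2] at hT
  induction hT using Submodule.span_induction with
  | mem u hu =>
    obtain ⟨a, ha, b, hb, rfl⟩ := hu
    simp only [mk_apply, e_tmul, h𝒳 b hb, zero_smul]
  | zero => simp
  | add u v _ _ hu hv => rw [map_add, hu, hv, add_zero]
  | smul c u _ hu => rw [map_smul, hu, smul_zero]

end Stmt2Aux

open Stmt2Aux

/-- `dim {T ∈ X̄⊗X̄ | m T = 0} = dim {T ∈ 𝒳⊗𝒳 | m T ∈ 𝒳} + dim 𝒳`,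
where `𝒳 ⊆ ker ε` is finite dimensional, `X̄ = 𝒳 ⊕ ℂ·1` and `m` is multiplication. -/
theorem stmt2 {B : Type*} [Ring B] [Algebra ℂ B]
    (ε : B →ₐ[ℂ] ℂ) (𝒳 : Submodule ℂ B) [FiniteDimensional ℂ 𝒳]
    (h𝒳 : ∀ x ∈ 𝒳, ε x = 0) :
    Module.finrank ℂ
      ((Submodule.map₂ (TensorProduct.mk ℂ B B)
          (𝒳 ⊔ Submodule.span ℂ {(1 : B)}) (𝒳 ⊔ Submodule.span ℂ {(1 : B)})) ⊓
        LinearMap.ker (LinearMap.mul' ℂ B) : Submodule ℂ (B ⊗[ℂ] B)) =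
    Module.finrank ℂ
      ((Submodule.map₂ (TensorProduct.mk ℂ B B) 𝒳 𝒳) ⊓
        (𝒳.comap (LinearMap.mul' ℂ B)) : Submodule ℂ (B ⊗[ℂ] B)) +
    Module.finrank ℂ 𝒳 := by
  classical
  set K : Submodule ℂ (B ⊗[ℂ] B) :=
    (Submodule.map₂ (TensorProduct.mk ℂ B B) 𝒳 𝒳) ⊓ (𝒳.comap (LinearMap.mul' ℂ B)) with hK
  set K' : Submodule ℂ (B ⊗[ℂ] B) :=
    (Submodule.map₂ (TensorProduct.mk ℂ B B)
          (𝒳 ⊔ Submodule.span ℂ {(1 : B)}) (𝒳 ⊔ Submodule.span ℂ {(1 : B)})) ⊓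
      LinearMap.ker (LinearMap.mul' ℂ B) with hK'
  -- finite dimensionality of K
  have hfg : (Submodule.map₂ (TensorProduct.mk ℂ B B) 𝒳 𝒳).FG :=
    Submodule.FG.map₂ _ (Module.Finite.iff_fg.mp inferInstance) (Module.Finite.iff_fg.mp inferInstance)
  haveI : FiniteDimensional ℂ (Submodule.map₂ (TensorProduct.mk ℂ B B) 𝒳 𝒳) :=
    Module.Finite.iff_fg.mpr hfg
  haveI : FiniteDimensional ℂ K :=
    Submodule.finiteDimensional_of_le (inf_le_left : K ≤ _)
  -- the linear map
  set F' : (↥K × ↥𝒳) →ₗ[ℂ] B ⊗[ℂ] B :=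
    F.comp (LinearMap.prodMap K.subtype 𝒳.subtype) with hF'
  have hF'app : ∀ (v : ↥K × ↥𝒳), F' v = F ((v.1 : B ⊗[ℂ] B), (v.2 : B)) := fun v => rfl
  -- injectivity
  have hinj : Function.Injective F' := by
    rw [← LinearMap.ker_eq_bot]
    refine le_antisymm ?_ bot_le
    rintro ⟨⟨T, hT⟩, ⟨x, hx⟩⟩ hv
    rw [LinearMap.mem_ker, hF'app] at hv
    have h1 : TensorProduct.map (p ε) (p ε) (F (T, x)) = 0 := by rw [hv]; simp
    rw [mapPP_F, mapPP_fix ε 𝒳 h𝒳 hT.1] at h1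
    have h2 : e ε (F (T, x)) = 0 := by rw [hv]; simp
    rw [e_F, e_fix ε 𝒳 h𝒳 hT.1, zero_add, p_eq_self ε 𝒳 h𝒳 hx] at h2
    simp only [Submodule.mem_bot, Prod.mk_eq_zero, Submodule.mk_eq_zero]
    exact ⟨h1, h2⟩
  -- range
  have hrange : LinearMap.range F' = K' := by
    apply le_antisymm
    · rintro S ⟨⟨⟨T, hT⟩, ⟨x, hx⟩⟩, rfl⟩
      rw [hF'app]
      constructor
      · rw [F_apply]
        refine sub_mem (add_mem ?_ ?_) ?_
        · exact Submodule.map₂_le_map₂ le_sup_left le_sup_left hT.1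
        · exact Submodule.apply_mem_map₂ _ (Submodule.mem_sup_left hx)
            (Submodule.mem_sup_right (Submodule.subset_span rfl))
        · exact Submodule.apply_mem_map₂ _
            (Submodule.mem_sup_right (Submodule.subset_span rfl))
            (Submodule.mem_sup_left (𝒳.add_mem hx hT.2))
      · exact LinearMap.mem_ker.mpr (mul_F T x)
    · rintro S ⟨hS1, hS2⟩
      replace hS2 : LinearMap.mul' ℂ B S = 0 := hS2
      have hTm := mapPP_mem ε 𝒳 h𝒳 hS1
      have hxm := e_mem ε 𝒳 h𝒳 hS1
      have he2m := e₂_mem ε 𝒳 h𝒳 hS1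
      set T := TensorProduct.map (p ε) (p ε) S with hTdef
      set x := e ε S with hxdef
      have key : S = T + x ⊗ₜ 1 + 1 ⊗ₜ (e₂ ε S) := by
        have hd := LinearMap.congr_fun (decomp ε (B := B)) S
        simpa [hS2] using hd
      have hm : LinearMap.mul' ℂ B T + x + e₂ ε S = 0 := by
        have := congrArg (LinearMap.mul' ℂ B) key
        rw [hS2] at this
        simpa using this.symm
      have he2eq : e₂ ε S = -(x + LinearMap.mul' ℂ B T) := by
        have h3 : (x + LinearMap.mul' ℂ B T) + e₂ ε S = 0 := by rw [← hm]; abel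
        exact eq_neg_of_add_eq_zero_right h3
      have hmT : LinearMap.mul' ℂ B T ∈ 𝒳 := by
        have h4 : LinearMap.mul' ℂ B T = -(x + e₂ ε S) := by
          have h5 : LinearMap.mul' ℂ B T + (x + e₂ ε S) = 0 := by rw [← hm]; abel
          exact eq_neg_of_add_eq_zero_left h5
        rw [h4]
        exact 𝒳.neg_mem (𝒳.add_mem hxm he2m)
      refine ⟨(⟨T, ⟨hTm, hmT⟩⟩, ⟨x, hxm⟩), ?_⟩
      rw [hF'app, F_apply]
      rw [key, he2eq]
      simp only [tmul_neg]
      abel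
  -- conclude
  calc Module.finrank ℂ K' = Module.finrank ℂ (LinearMap.range F') := by rw [hrange]
    _ = Module.finrank ℂ (↥K × ↥𝒳) := LinearMap.finrank_range_of_inj hinj
    _ = Module.finrank ℂ K + Module.finrank ℂ 𝒳 := Module.finrank_prod
end

section
/- In the algebra U with K = f_{q^{1/2}}, the elements H = (2/(q−q^{-1}))(K^{-2} − 1), X = q^{1/2} F K^{-1}, Y = q^{1/2} K^{-1} E satisfy: q^{-1}HX − qXH = 2X, qHY − q^{-1}YH = −2Y, and qXY − q^{-1}YX − ((q−q^{-1})/4)H² = H. -/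
/-!
Since `K'` skew-commutes with `F` and `E`, moving `K'^2` past `F` or `E` only produces a
factor `q^{±2}`; this gives the first two relations, the difference of the two powers of `q`
being absorbed by the factor `2/(q - q⁻¹)` in `H`. In the third, `qXY` cancels the `FE`-part of
`q⁻¹YX = K'EFK'`, and the remaining `(K'^4 - 1)/(q - q⁻¹)` coming from `EF - FE` differs from
`((q - q⁻¹)/4) H²` exactly by `H`.
-/

section SkewCommutation

variable {R A : Type*} [CommSemiring R] [Semiring A] [Algebra R A] {r : R} {a a' b : A}

theorem pow_mul_eq_smul_mul_pow (h : a * b = r • (b * a)) (n : ℕ) :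
    a ^ n * b = r ^ n • (b * a ^ n) := by
  induction n with
  | zero => simp
  | succ n ih =>
    rw [pow_succ', mul_assoc, ih, mul_smul_comm, ← mul_assoc, h, smul_mul_assoc, smul_smul,
      mul_assoc, ← pow_succ', ← pow_succ]

theorem mul_pow_eq_smul_pow_mul (h : a * b = r • (b * a)) (n : ℕ) :
    a * b ^ n = r ^ n • (b ^ n * a) := by
  induction n with
  | zero => simp
  | succ n ih =>
    rw [pow_succ, ← mul_assoc, ih, smul_mul_assoc, mul_assoc, h, mul_smul_comm, smul_smul,
      ← mul_assoc, ← pow_succ, ← pow_succ]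

theorem mul_eq_smul_mul_of_inverse (h₁ : a * a' = 1) (h₂ : a' * a = 1)
    (h : a * b = r • (b * a)) : b * a' = r • (a' * b) :=
  calc b * a' = a' * (a * b) * a' := by rw [← mul_assoc, h₂, one_mul]
    _ = r • (a' * b) := by
      rw [h, mul_smul_comm, smul_mul_assoc, mul_assoc, mul_assoc, h₁, mul_one]

end SkewCommutation

namespace Calculus4

variable {𝕜 A : Type*} [Field 𝕜] [Ring A] [Algebra 𝕜 A] {q s : 𝕜} {E F K K' : A}

/-- `K'` stands for `K⁻¹` and `s` for `q^{1/2}`. -/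
def H (q : 𝕜) (K' : A) : A := (2 * (q - q⁻¹)⁻¹) • (K' ^ 2 - 1)

def X (s : 𝕜) (F K' : A) : A := s • (F * K')

def Y (s : 𝕜) (K' E : A) : A := s • (K' * E)

theorem relation_H_X (hq : q ≠ 0) (hq2 : q ^ 2 ≠ 1) (hK'F : K' * F = q • (F * K')) :
    q⁻¹ • (H q K' * X s F K') - q • (X s F K' * H q K') = (2 : 𝕜) • X s F K' := by
  have := sub_ne_zero.2 hq2
  simp only [H, X, sub_mul, mul_sub, smul_mul_assoc, mul_smul_comm, one_mul, mul_one,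
    ← mul_assoc, pow_mul_eq_smul_mul_pow hK'F]
  simp only [mul_assoc, ← pow_succ, ← pow_succ', smul_sub, smul_smul]
  match_scalars <;> field_simp <;> ring

theorem relation_H_Y (hq : q ≠ 0) (hq2 : q ^ 2 ≠ 1) (hEK' : E * K' = q • (K' * E)) :
    q • (H q K' * Y s K' E) - q⁻¹ • (Y s K' E * H q K') = (-2 : 𝕜) • Y s K' E := by
  have := sub_ne_zero.2 hq2
  simp only [H, Y, sub_mul, mul_sub, smul_mul_assoc, mul_smul_comm, one_mul, mul_one,
    mul_assoc, mul_pow_eq_smul_pow_mul hEK']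
  simp only [← mul_assoc, ← pow_succ, ← pow_succ', smul_sub, smul_smul]
  match_scalars <;> field_simp <;> ring

theorem X_mul_Y (hs : s ^ 2 = q) : X s F K' * Y s K' E = q • (F * K' ^ 2 * E) := by
  rw [X, Y, smul_mul_smul_comm, ← sq, hs, sq, mul_assoc, ← mul_assoc K', ← mul_assoc]

theorem Y_mul_X (hs : s ^ 2 = q) (hKK' : K * K' = 1) (hK'K : K' * K = 1)
    (hK'F : K' * F = q • (F * K')) (hEK' : E * K' = q • (K' * E))
    (hEF : E * F - F * E = (q - q⁻¹)⁻¹ • (K ^ 2 - K' ^ 2)) :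
    Y s K' E * X s F K' = q • (q ^ 2 • (F * K' ^ 2 * E) + (q - q⁻¹)⁻¹ • (1 - K' ^ 4)) := by
  have hK'FEK' : K' * (F * E) * K' = q ^ 2 • (F * K' ^ 2 * E) := by
    rw [← mul_assoc, hK'F, smul_mul_assoc, smul_mul_assoc, mul_assoc, mul_assoc, hEK',
      mul_smul_comm, mul_smul_comm, smul_smul, ← mul_assoc K', ← mul_assoc, ← sq, ← sq]
  have hK'K2K' : K' * K ^ 2 * K' = 1 := by
    rw [sq, ← mul_assoc, hK'K, one_mul, hKK']
  calc Y s K' E * X s F K' = q • (K' * (E * F) * K') := by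
        rw [Y, X, smul_mul_smul_comm, ← sq, hs]
        simp only [mul_assoc]
    _ = _ := by
      rw [sub_eq_iff_eq_add'.1 hEF, mul_add, add_mul, hK'FEK', mul_smul_comm, smul_mul_assoc,
        mul_sub, sub_mul, hK'K2K', ← pow_succ', ← pow_succ]

theorem relation_X_Y [CharZero 𝕜] (hs : s ^ 2 = q) (hq2 : q ^ 2 ≠ 1)
    (hKK' : K * K' = 1) (hK'K : K' * K = 1) (hK'F : K' * F = q • (F * K'))
    (hEK' : E * K' = q • (K' * E)) (hEF : E * F - F * E = (q - q⁻¹)⁻¹ • (K ^ 2 - K' ^ 2)) :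
    q • (X s F K' * Y s K' E) - q⁻¹ • (Y s K' E * X s F K')
      - ((q - q⁻¹) / 4) • (H q K' * H q K') = H q K' := by
  rw [X_mul_Y hs, Y_mul_X hs hKK' hK'K hK'F hEK' hEF]
  have := sub_ne_zero.2 hq2
  simp only [H, smul_mul_assoc, mul_smul_comm, smul_smul, sub_mul, mul_sub, one_mul, mul_one,
    ← pow_add, smul_add, smul_sub]
  match_scalars <;> field_simp <;> ring

end Calculus4

/-- In `U` with `K' = K⁻¹`, the elements `H = (2/(q−q⁻¹))(K⁻²−1)`,
`X = q^{1/2}FK⁻¹`, `Y = q^{1/2}K⁻¹E` (here `s = q^{1/2}`) satisfy the relations of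
calculus 4: `q⁻¹HX − qXH = 2X`, `qHY − q⁻¹YH = −2Y`,
`qXY − q⁻¹YX − ((q−q⁻¹)/4)H² = H`. -/
theorem stmt12 {A : Type*} [Ring A] [Algebra ℂ A]
    (q s : ℂ) (hs : s ^ 2 = q) (hq0 : q ≠ 0)
    (hroot : ∀ n : ℕ, 0 < n → q ^ n ≠ 1)
    (E F K K' : A)
    (hKK' : K * K' = 1) (hK'K : K' * K = 1)
    (hKE : K * E = q • (E * K)) (hKF : K * F = q⁻¹ • (F * K))
    (hEF : E * F - F * E = (q - q⁻¹)⁻¹ • (K ^ 2 - K' ^ 2)) :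
    let H := (2 * (q - q⁻¹)⁻¹) • (K' ^ 2 - 1)
    let X := s • (F * K')
    let Y := s • (K' * E)
    q⁻¹ • (H * X) - q • (X * H) = (2 : ℂ) • X ∧
    q • (H * Y) - q⁻¹ • (Y * H) = (-2 : ℂ) • Y ∧
    q • (X * Y) - q⁻¹ • (Y * X) - ((q - q⁻¹) / 4) • (H * H) = H := by
  have hq2 : q ^ 2 ≠ 1 := hroot 2 two_pos
  have hEK' : E * K' = q • (K' * E) := mul_eq_smul_mul_of_inverse hKK' hK'K hKE
  have hK'F : K' * F = q • (F * K') :=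
    (inv_smul_eq_iff₀ hq0).1 (mul_eq_smul_mul_of_inverse hKK' hK'K hKF).symm
  exact ⟨Calculus4.relation_H_X hq0 hq2 hK'F, Calculus4.relation_H_Y hq0 hq2 hEK',
    Calculus4.relation_X_Y hs hq2 hKK' hK'K hK'F hEK' hEF⟩
end

section
/- In the algebra U with K = f_{q^{1/2}}, the elements H = (2/(q²−q^{-2}))(K^{-4} − 1), X = q^{-1/2} F K, Y = q^{3/2} K^{-3} E satisfy: q^{-2}HX − q²XH = 2X, q²HY − q^{-2}YH = −2Y, and qXY − q^{-1}YX = ((q+q^{-1})/2) H. -/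
/-!
Up to scalar factors, `H`, `X`, `Y` are `K⁻⁴ - 1`, `F K` and `K⁻³ E`. Since `K` `q`-commutes with
`E` and `F`, so do the powers of `K⁻¹`, and each product of two of these elements is a scalar
multiple of a single monomial `F K⁻ⁿ` or `K⁻ⁿ E`, so the first two relations hold coefficientwise.
The only genuinely noncommutative input is `EF - FE`: it enters `Y X` through
`K⁻³ (E F) K = q² F K⁻² E + (q - q⁻¹)⁻¹ (1 - K⁻⁴)`, and this last term is the multiple of `H`
in the third relation.
-/

def QCommute {R A : Type*} [CommSemiring R] [Semiring A] [Algebra R A] (c : R) (a b : A) : Prop :=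
  a * b = c • (b * a)

namespace QCommute

section CommSemiring

variable {R A : Type*} [CommSemiring R] [Semiring A] [Algebra R A] {c : R} {a a' b : A}

theorem pow_left (h : QCommute c a b) (n : ℕ) : QCommute (c ^ n) (a ^ n) b := by
  induction n with
  | zero => simp [QCommute]
  | succ n ih =>
    calc a ^ (n + 1) * b = a * (a ^ n * b) := by rw [pow_succ', mul_assoc]
      _ = c ^ n • ((a * b) * a ^ n) := by rw [ih, mul_smul_comm, mul_assoc]
      _ = c ^ (n + 1) • (b * a ^ (n + 1)) := by
        rw [h, smul_mul_assoc, smul_smul, mul_assoc, ← pow_succ', ← pow_succ]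

theorem pow_right (h : QCommute c a b) (n : ℕ) : QCommute (c ^ n) a (b ^ n) := by
  have : SemiconjBy a b (c • b) := by rw [SemiconjBy, h, smul_mul_assoc]
  rw [QCommute, (this.pow_right n).eq, smul_pow, smul_mul_assoc]

theorem of_inverse (h : QCommute c a b) (hinv : a' * a = 1) (hinv' : a * a' = 1) :
    QCommute c b a' :=
  calc b * a' = a' * (a * b) * a' := by rw [← mul_assoc, hinv, one_mul]
    _ = c • (a' * b * (a * a')) := by
      rw [h, mul_smul_comm, smul_mul_assoc, mul_assoc, mul_assoc, mul_assoc]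
    _ = c • (a' * b) := by rw [hinv', mul_one]

end CommSemiring

theorem symm {R A : Type*} [Semifield R] [Semiring A] [Algebra R A] {c : R} {a b : A}
    (h : QCommute c a b) (hc : c ≠ 0) : QCommute c⁻¹ b a := by
  rw [QCommute, h, inv_smul_smul₀ hc]

end QCommute

theorem smul_mul_smul_sub_smul_mul_smul {R A : Type*} [CommSemiring R] [Ring A] [Algebra R A]
    (u v a b : R) (x y : A) :
    u • ((a • x) * (b • y)) - v • ((b • y) * (a • x)) = (a * b) • (u • (x * y) - v • (y * x)) := by
  rw [smul_mul_smul_comm, smul_mul_smul_comm, smul_sub, smul_comm u, smul_comm v, mul_comm b a]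

structure UqSl2Relations {R A : Type*} [Field R] [Ring A] [Algebra R A]
    (q : R) (E F K K' : A) : Prop where
  mul_inv_cancel : K * K' = 1
  inv_mul_cancel : K' * K = 1
  qcommute_E : QCommute q K E
  qcommute_F : QCommute q⁻¹ K F
  comm_E_F : E * F - F * E = (q - q⁻¹)⁻¹ • (K ^ 2 - K' ^ 2)

namespace UqSl2Relations

variable {R A : Type*} [Field R] [Ring A] [Algebra R A] {q : R} {E F K K' : A}

theorem inv_pow_succ_mul (h : UqSl2Relations q E F K K') (n : ℕ) : K' ^ (n + 1) * K = K' ^ n := by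
  rw [pow_succ, mul_assoc, h.inv_mul_cancel, mul_one]

theorem mul_inv_pow_succ (h : UqSl2Relations q E F K K') (n : ℕ) : K * K' ^ (n + 1) = K' ^ n := by
  rw [pow_succ', ← mul_assoc, h.mul_inv_cancel, one_mul]

theorem qcommute_inv_pow_F (h : UqSl2Relations q E F K K') (hq : q ≠ 0) (n : ℕ) :
    QCommute (q ^ n) (K' ^ n) F := by
  have := (h.qcommute_F.of_inverse h.inv_mul_cancel h.mul_inv_cancel).symm (inv_ne_zero hq)
  rw [inv_inv] at this
  exact this.pow_left n

theorem qcommute_E_inv_pow (h : UqSl2Relations q E F K K') (n : ℕ) :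
    QCommute (q ^ n) E (K' ^ n) :=
  (h.qcommute_E.of_inverse h.inv_mul_cancel h.mul_inv_cancel).pow_right n

/- `K' ^ 4 - 1`, `F * K` and `K' ^ 3 * E` are `H`, `X` and `Y` without their scalar factors,
which `smul_mul_smul_sub_smul_mul_smul` restores. -/
theorem twisted_comm_H_X (h : UqSl2Relations q E F K K') (hq : q ≠ 0) :
    (q ^ 2)⁻¹ • ((K' ^ 4 - 1) * (F * K)) - q ^ 2 • ((F * K) * (K' ^ 4 - 1)) =
      (q ^ 2 - (q ^ 2)⁻¹) • (F * K) := by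
  have hHX : (K' ^ 4 - 1) * (F * K) = q ^ 4 • (F * K' ^ 3) - F * K := by
    rw [sub_mul, one_mul, ← mul_assoc, h.qcommute_inv_pow_F hq 4, smul_mul_assoc, mul_assoc,
      h.inv_pow_succ_mul]
  have hXH : (F * K) * (K' ^ 4 - 1) = F * K' ^ 3 - F * K := by
    rw [mul_sub, mul_one, mul_assoc, h.mul_inv_pow_succ]
  rw [hHX, hXH]
  match_scalars <;> field_simp <;> ring

theorem twisted_comm_H_Y (h : UqSl2Relations q E F K K') (hq : q ≠ 0) :
    q ^ 2 • ((K' ^ 4 - 1) * (K' ^ 3 * E)) - (q ^ 2)⁻¹ • ((K' ^ 3 * E) * (K' ^ 4 - 1)) =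
      -(q ^ 2 - (q ^ 2)⁻¹) • (K' ^ 3 * E) := by
  have hHY : (K' ^ 4 - 1) * (K' ^ 3 * E) = K' ^ 7 * E - K' ^ 3 * E := by
    rw [sub_mul, one_mul, ← mul_assoc, ← pow_add]
  have hYH : (K' ^ 3 * E) * (K' ^ 4 - 1) = q ^ 4 • (K' ^ 7 * E) - K' ^ 3 * E := by
    rw [mul_sub, mul_one, mul_assoc, h.qcommute_E_inv_pow 4, mul_smul_comm, ← mul_assoc, ← pow_add]
  rw [hHY, hYH]
  match_scalars <;> field_simp <;> ring

theorem twisted_comm_X_Y (h : UqSl2Relations q E F K K') (hq : q ≠ 0) :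
    q • ((F * K) * (K' ^ 3 * E)) - q⁻¹ • ((K' ^ 3 * E) * (F * K)) =
      (q ^ 2 - 1)⁻¹ • (K' ^ 4 - 1) := by
  have hXY : (F * K) * (K' ^ 3 * E) = F * (K' ^ 2 * E) := by
    rw [mul_assoc, ← mul_assoc K, h.mul_inv_pow_succ, ← mul_assoc]
  have hFE : K' ^ 3 * (F * E * K) = q ^ 2 • (F * (K' ^ 2 * E)) := by
    rw [mul_assoc, h.qcommute_E.symm hq, ← mul_assoc, h.qcommute_inv_pow_F hq 3,
      smul_mul_smul_comm, mul_assoc, ← mul_assoc (K' ^ 3), h.inv_pow_succ_mul]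
    congr 1
    field_simp
  have hKK : K' ^ 3 * ((K ^ 2 - K' ^ 2) * K) = 1 - K' ^ 4 := by
    rw [sub_mul, mul_sub, ← pow_succ, pow_mul_pow_eq_one 3 h.inv_mul_cancel, ← mul_assoc, ← pow_add,
      h.inv_pow_succ_mul]
  have hYX : (K' ^ 3 * E) * (F * K) = q ^ 2 • (F * (K' ^ 2 * E)) + (q - q⁻¹)⁻¹ • (1 - K' ^ 4) := by
    rw [mul_assoc, ← mul_assoc E, ← sub_add_cancel (E * F) (F * E), h.comm_E_F, add_mul,
      mul_add, hFE, smul_mul_assoc, mul_smul_comm, hKK, add_comm]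
  rw [hXY, hYX]
  match_scalars
  · field_simp
    ring
  · field_simp
  · field_simp

end UqSl2Relations

/-- In `U` with `K' = K⁻¹`, the elements `H = (2/(q²−q⁻²))(K⁻⁴−1)`,
`X = q^{−1/2}FK`, `Y = q^{3/2}K⁻³E` satisfy the relations of calculus 8:
`q⁻²HX − q²XH = 2X`, `q²HY − q⁻²YH = −2Y`, `qXY − q⁻¹YX = ((q+q⁻¹)/2)H`. -/
theorem stmt13 {A : Type*} [Ring A] [Algebra ℂ A]
    (q s : ℂ) (hs : s ^ 2 = q) (hq0 : q ≠ 0)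
    (hroot : ∀ n : ℕ, 0 < n → q ^ n ≠ 1)
    (E F K K' : A)
    (hKK' : K * K' = 1) (hK'K : K' * K = 1)
    (hKE : K * E = q • (E * K)) (hKF : K * F = q⁻¹ • (F * K))
    (hEF : E * F - F * E = (q - q⁻¹)⁻¹ • (K ^ 2 - K' ^ 2)) :
    let H := (2 * (q ^ 2 - (q ^ 2)⁻¹)⁻¹) • (K' ^ 4 - 1)
    let X := s⁻¹ • (F * K)
    let Y := (s ^ 3) • (K' ^ 3 * E)
    (q ^ 2)⁻¹ • (H * X) - (q ^ 2) • (X * H) = (2 : ℂ) • X ∧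
    (q ^ 2) • (H * Y) - (q ^ 2)⁻¹ • (Y * H) = (-2 : ℂ) • Y ∧
    q • (X * Y) - q⁻¹ • (Y * X) = ((q + q⁻¹) / 2) • H := by
  have hU : UqSl2Relations q E F K K' := ⟨hKK', hK'K, hKE, hKF, hEF⟩
  have hq4 : q ^ 4 ≠ 1 := hroot 4 (by norm_num)
  have hq2 : q ^ 2 - 1 ≠ 0 := fun h ↦ hq4 (by linear_combination (q ^ 2 + 1) * h)
  have hss : s⁻¹ * s ^ 3 = q := by
    rw [← hs]
    field_simp
  refine ⟨?_, ?_, ?_⟩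
  · rw [smul_mul_smul_sub_smul_mul_smul, hU.twisted_comm_H_X hq0, smul_smul, smul_smul]
    congr 1
    field_simp
  · rw [smul_mul_smul_sub_smul_mul_smul, hU.twisted_comm_H_Y hq0, smul_smul, smul_smul]
    congr 1
    field_simp
  · rw [smul_mul_smul_sub_smul_mul_smul, hU.twisted_comm_X_Y hq0, smul_smul, smul_smul, hss]
    congr 1
    field_simp
    ring
end

section
/- In the algebra U with K = f_{q^{1/2}}, the elements H = (2(q^{-1}−q)/(q⁴+1))·(FK²E + q⁵(K⁴−1)/(q²−1)²), X = q^{-1/2}FK, Y = q^{-1/2}KE satisfy q^{-2}XY − q²YX = ((q²+q^{-2})/2) H. -/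
/-! Both products reduce to multiples of `F K² E` and `K⁴ - 1`: `XY = q⁻¹ F K² E` directly, while in
`YX = q⁻¹ K (E F) K` the relation `EF = FE + (K² - K⁻²)/(q - q⁻¹)` and the `q`-commutation of `K`
with `E` and `F` give `K E F K = q⁻² F K² E + (K⁴ - 1)/(q - q⁻¹)`. The identity is then one
between the scalar coefficients of these two elements. -/

section QCommutation

variable {k A : Type*} [Field k] [Ring A] [Algebra k A] {q : k} {E F K K' : A}

theorem mul_sq_sub_sq_mul_of_mul_eq_one (hKK' : K * K' = 1) (hK'K : K' * K = 1) :
    K * (K ^ 2 - K' ^ 2) * K = K ^ 4 - 1 := by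
  have hK' : K * K' ^ 2 * K = 1 := by
    rw [show K * K' ^ 2 * K = (K * K') * (K' * K) by noncomm_ring, hKK', hK'K, one_mul]
  rw [mul_sub, sub_mul, hK', show K * K ^ 2 * K = K ^ 4 by noncomm_ring]

theorem mul_mul_mul_eq_of_qcomm (hq0 : q ≠ 0) (hKE : K * E = q • (E * K))
    (hKF : K * F = q⁻¹ • (F * K)) :
    K * (F * E) * K = (q ^ 2)⁻¹ • (F * K ^ 2 * E) := by
  have hEK : E * K = q⁻¹ • (K * E) := by
    rw [hKE, smul_smul, inv_mul_cancel₀ hq0, one_smul]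
  calc K * (F * E) * K = (K * F) * (E * K) := by noncomm_ring
    _ = (q⁻¹ * q⁻¹) • (F * K * (K * E)) := by
      rw [hKF, hEK, smul_mul_assoc, mul_smul_comm, smul_smul]
    _ = (q ^ 2)⁻¹ • (F * K ^ 2 * E) := by
      rw [← mul_inv, ← sq]; congr 1; noncomm_ring

theorem mul_mul_mul_eq_of_qcomm_of_commutator (hq0 : q ≠ 0) (hKK' : K * K' = 1)
    (hK'K : K' * K = 1) (hKE : K * E = q • (E * K)) (hKF : K * F = q⁻¹ • (F * K))
    (hEF : E * F - F * E = (q - q⁻¹)⁻¹ • (K ^ 2 - K' ^ 2)) :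
    K * E * (F * K) = (q ^ 2)⁻¹ • (F * K ^ 2 * E) + (q - q⁻¹)⁻¹ • (K ^ 4 - 1) := by
  calc K * E * (F * K) = K * (F * E + (q - q⁻¹)⁻¹ • (K ^ 2 - K' ^ 2)) * K := by
        rw [← sub_eq_iff_eq_add'.mp hEF]; noncomm_ring
    _ = _ := by
      rw [mul_add, add_mul, mul_mul_mul_eq_of_qcomm hq0 hKE hKF, mul_smul_comm, smul_mul_assoc,
        mul_sq_sub_sq_mul_of_mul_eq_one hKK' hK'K]

end QCommutation

/-- In `U` with `K' = K⁻¹`, the elements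
`H = (2(q⁻¹−q)/(q⁴+1))(FK²E + q⁵(K⁴−1)/(q²−1)²)`, `X = q^{−1/2}FK`, `Y = q^{−1/2}KE`
satisfy `q⁻²XY − q²YX = ((q²+q⁻²)/2)H` (calculus 1). -/
theorem stmt15 {A : Type*} [Ring A] [Algebra ℂ A]
    (q s : ℂ) (hs : s ^ 2 = q) (hq0 : q ≠ 0)
    (hroot : ∀ n : ℕ, 0 < n → q ^ n ≠ 1) (hq4 : q ^ 4 ≠ -1)
    (E F K K' : A)
    (hKK' : K * K' = 1) (hK'K : K' * K = 1)
    (hKE : K * E = q • (E * K)) (hKF : K * F = q⁻¹ • (F * K))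
    (hEF : E * F - F * E = (q - q⁻¹)⁻¹ • (K ^ 2 - K' ^ 2)) :
    let H := (2 * (q⁻¹ - q) * (q ^ 4 + 1)⁻¹) •
      (F * K ^ 2 * E + (q ^ 5 * ((q ^ 2 - 1) ^ 2)⁻¹) • (K ^ 4 - 1))
    let X := s⁻¹ • (F * K)
    let Y := s⁻¹ • (K * E)
    (q ^ 2)⁻¹ • (X * Y) - (q ^ 2) • (Y * X) = ((q ^ 2 + (q ^ 2)⁻¹) / 2) • H := by
  intro H X Y
  have hq2 : q ^ 2 - 1 ≠ 0 := sub_ne_zero.mpr (hroot 2 two_pos)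
  have hq4' : q ^ 4 + 1 ≠ 0 := fun h => hq4 (eq_neg_of_add_eq_zero_left h)
  have hqq : q - q⁻¹ ≠ 0 := by
    rw [show q - q⁻¹ = (q ^ 2 - 1) / q by field_simp]
    exact div_ne_zero hq2 hq0
  have hss : s⁻¹ * s⁻¹ = q⁻¹ := by rw [← mul_inv, ← sq, hs]
  have hXY : X * Y = q⁻¹ • (F * K ^ 2 * E) := by
    simp only [X, Y, smul_mul_smul, hss]; congr 1; noncomm_ring
  have hYX : Y * X = q⁻¹ • ((q ^ 2)⁻¹ • (F * K ^ 2 * E) + (q - q⁻¹)⁻¹ • (K ^ 4 - 1)) := by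
    simp only [Y, X, smul_mul_smul, hss,
      mul_mul_mul_eq_of_qcomm_of_commutator hq0 hKK' hK'K hKE hKF hEF]
  simp only [H, hXY, hYX, smul_add, smul_smul]
  match_scalars <;> field_simp <;> ring
end
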